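/- Let Ω be second countable, (T(t))_{t≥0} a positive strong Feller semigroup on B_b(Ω) with sup_{t ≥ τ} ‖T(t)‖ < ∞ for some τ > 0, and μ a strictly positive, finite, invariant Borel measure. Assume that for all x ∈ Ω and t > 0 there exists 0 ≤ k_{t,x} ∈ L¹(Ω,μ) with (T(t)f)(x) = ∫ k_{t,x} f dμ for all f ∈ B_b(Ω), and that for each c, t > 0 the family { T(t)f : |f| ≤ c } is equicontinuous. Then for every x ∈ Ω the family { k_{t,x} : t ≥ 2τ } is uniformly integrable: for all ε > 0 there exists δ > 0 such that ∫_A k_{t,x} dμ < ε whenever t ≥ 2τ and μ(A) < δ. -/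

import Mathlib

/-!
For `t ≥ 2τ` the semigroup law gives `∫_A k_{t,x} dμ = (T(t) 1_A)(x) = ∫ k_{τ,x} g dμ` with
`g = T(t - τ) 1_A`, where `0 ≤ g ≤ M` by positivity and the uniform bound, and `∫ g dμ = μ(A)` by
invariance. So the single integrable kernel `k_{τ,x}` controls every `t ≥ 2τ`: truncating it at a
level `R` gives `∫ k_{τ,x} g dμ ≤ R μ(A) + M ∫ (k_{τ,x} - R)⁺ dμ`, and both terms are small once `R`
is large and `μ(A)` is small.
-/

open MeasureTheory Filter Topology Set

/-- `Bb f`: `f` is a bounded Borel measurable real-valued function. -/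
def Bb {Ω : Type*} [MeasurableSpace Ω] (f : Ω → ℝ) : Prop :=
  Measurable f ∧ ∃ C : ℝ, ∀ x, |f x| ≤ C

theorem Bb.integrable {Ω : Type*} [MeasurableSpace Ω] {f : Ω → ℝ} (hf : Bb f)
    (μ : Measure Ω) [IsFiniteMeasure μ] : Integrable f μ :=
  let ⟨hmeas, C, hC⟩ := hf
  .of_bound hmeas.aestronglyMeasurable C (ae_of_all _ hC)

theorem abs_indicator_one_le {Ω : Type*} (A : Set Ω) (y : Ω) : |A.indicator (1 : Ω → ℝ) y| ≤ 1 := by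
  by_cases hy : y ∈ A <;> simp [hy]

theorem Bb.indicator_one {Ω : Type*} [MeasurableSpace Ω] {A : Set Ω} (hA : MeasurableSet A) :
    Bb (A.indicator 1) :=
  ⟨measurable_one.indicator hA, 1, abs_indicator_one_le A⟩

theorem mul_le_mul_add_posPart_sub_mul {k g R M : ℝ} (hg₀ : 0 ≤ g) (hgM : g ≤ M) :
    k * g ≤ R * g + max (k - R) 0 * M := by
  rcases le_or_gt k R with hkR | hRk
  · rw [max_eq_right (sub_nonpos.mpr hkR)]
    nlinarith
  · rw [max_eq_left (sub_nonneg.mpr hRk.le)]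
    nlinarith

theorem abs_posPart_sub_le {a R : ℝ} (hR : 0 ≤ R) : |max (a - R) 0| ≤ |a| := by
  rw [abs_of_nonneg (le_max_right _ _)]
  exact max_le (by linarith [le_abs_self a]) (abs_nonneg a)

namespace MeasureTheory.Integrable

variable {α : Type*} [MeasurableSpace α] {μ : Measure α} {k : α → ℝ}

theorem integrable_posPart_sub (hk : Integrable k μ) {R : ℝ} (hR : 0 ≤ R) :
    Integrable (fun y => max (k y - R) 0) μ :=
  hk.abs.mono'
    ((hk.aemeasurable.sub aemeasurable_const).max aemeasurable_const).aestronglyMeasurable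
    (ae_of_all _ fun _ => abs_posPart_sub_le hR)

theorem tendsto_integral_posPart_sub_nat (hk : Integrable k μ) :
    Tendsto (fun n : ℕ => ∫ y, max (k y - n) 0 ∂μ) atTop (𝓝 0) := by
  have hlim : ∀ᵐ y ∂μ, Tendsto (fun n : ℕ => max (k y - n) 0) atTop (𝓝 0) := ae_of_all _ fun y =>
    tendsto_const_nhds.congr' <| by
      filter_upwards [eventually_ge_atTop ⌈k y⌉₊] with n hn
      have hkn : k y ≤ n := (Nat.le_ceil _).trans (by exact_mod_cast hn)
      rw [max_eq_right (sub_nonpos.mpr hkn)]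
  simpa using tendsto_integral_of_dominated_convergence _
    (fun n => (hk.integrable_posPart_sub n.cast_nonneg).aestronglyMeasurable) hk.abs
    (fun n => ae_of_all _ fun _ => abs_posPart_sub_le n.cast_nonneg) hlim

theorem exists_forall_integral_mul_lt_of_integral_lt (hk : Integrable k μ) (M : ℝ) {ε : ℝ}
    (hε : 0 < ε) :
    ∃ δ > (0 : ℝ), ∀ g : α → ℝ, Integrable g μ → (∀ᵐ y ∂μ, 0 ≤ g y ∧ g y ≤ M) →
      ∫ y, g y ∂μ < δ → ∫ y, k y * g y ∂μ < ε := by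
  obtain ⟨n, hn⟩ := ((hk.tendsto_integral_posPart_sub_nat.mul_const M).eventually
    (gt_mem_nhds (show 0 * M < ε / 2 by simpa using half_pos hε))).exists
  set R : ℝ := (n : ℝ)
  have hR : (0 : ℝ) ≤ R := n.cast_nonneg
  refine ⟨ε / (2 * (R + 1)), by positivity, fun g hg hgM hgδ => ?_⟩
  have htail : Integrable (fun y => max (k y - R) 0) μ := hk.integrable_posPart_sub hR
  have hkg : Integrable (fun y => k y * g y) μ :=
    (hk.bdd_mul (c := max |M| 0) hg.aestronglyMeasurable <| hgM.mono fun y hy => by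
      rw [Real.norm_eq_abs, abs_of_nonneg hy.1]
      exact hy.2.trans ((le_abs_self M).trans (le_max_left _ _))).congr
      (ae_of_all _ fun y => mul_comm _ _)
  have hg₀ : 0 ≤ ∫ y, g y ∂μ := integral_nonneg_of_ae (hgM.mono fun y hy => hy.1)
  have hRg : R * ∫ y, g y ∂μ ≤ ε / 2 := calc
    R * ∫ y, g y ∂μ ≤ (R + 1) * (ε / (2 * (R + 1))) := by gcongr; linarith
    _ = ε / 2 := by field_simp
  calc ∫ y, k y * g y ∂μ
      ≤ ∫ y, (R * g y + max (k y - R) 0 * M) ∂μ :=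
        integral_mono_ae hkg ((hg.const_mul R).add (htail.mul_const M)) <|
          hgM.mono fun y hy => mul_le_mul_add_posPart_sub_mul hy.1 hy.2
    _ = R * ∫ y, g y ∂μ + (∫ y, max (k y - R) 0 ∂μ) * M := by
        rw [integral_add (hg.const_mul R) (htail.mul_const M), integral_const_mul,
          integral_mul_const]
    _ < ε / 2 + ε / 2 := add_lt_add_of_le_of_lt hRg hn
    _ = ε := add_halves ε

end MeasureTheory.Integrable

theorem stmt_14_general {Ω : Type*} [MeasurableSpace Ω]
    (μ : Measure Ω) [IsFiniteMeasure μ]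
    (T : ℝ → (Ω → ℝ) → (Ω → ℝ))
    (hTBb : ∀ t, 0 ≤ t → ∀ f, Bb f → Bb (T t f))
    (hpos : ∀ t, 0 ≤ t → ∀ f, Bb f → (∀ x, 0 ≤ f x) → ∀ x, 0 ≤ T t f x)
    (hsg : ∀ s t : ℝ, 0 ≤ s → 0 ≤ t → ∀ f, Bb f → T (s + t) f = T s (T t f))
    (hinv : ∀ t, 0 ≤ t → ∀ f, Bb f → ∫ x, T t f x ∂μ = ∫ x, f x ∂μ)
    (τ : ℝ) (hτ : 0 < τ)
    (hbdd : ∃ M : ℝ, ∀ t, τ ≤ t → ∀ f, Bb f → (∀ x, |f x| ≤ 1) → ∀ x, |T t f x| ≤ M)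
    (K : ℝ → Ω → Ω → ℝ)
    (hK : ∀ t, 0 < t → ∀ x : Ω, (∀ᵐ y ∂μ, 0 ≤ K t x y) ∧ Integrable (K t x) μ ∧
      ∀ f, Bb f → T t f x = ∫ y, K t x y * f y ∂μ) :
    ∀ x : Ω, ∀ ε > (0 : ℝ), ∃ δ > (0 : ℝ), ∀ t, 2 * τ ≤ t →
      ∀ A : Set Ω, MeasurableSet A → μ A < ENNReal.ofReal δ →
        ∫ y in A, K t x y ∂μ < ε := by
  intro x ε hε
  obtain ⟨M, hM⟩ := hbdd
  obtain ⟨-, hKint, hKrep⟩ := hK τ hτ x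
  obtain ⟨δ, hδ, hsmall⟩ := hKint.exists_forall_integral_mul_lt_of_integral_lt M hε
  refine ⟨δ, hδ, fun t ht A hA hμA => ?_⟩
  have h1A := Bb.indicator_one hA
  have hg : Bb (T (t - τ) (A.indicator 1)) := hTBb _ (by linarith) _ h1A
  have hg_mass : ∫ y, T (t - τ) (A.indicator 1) y ∂μ = μ.real A := by
    rw [hinv _ (by linarith) _ h1A, integral_indicator_one hA]
  have hkernel : ∫ y in A, K t x y ∂μ = ∫ y, K τ x y * T (t - τ) (A.indicator 1) y ∂μ := by
    rw [← hKrep _ hg, ← hsg _ _ hτ.le (by linarith) _ h1A, add_sub_cancel,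
      (hK t (by linarith) x).2.2 _ h1A, ← integral_indicator hA]
    simp_rw [← Set.indicator_mul_right, Pi.one_apply, mul_one]
  rw [hkernel]
  refine hsmall _ (hg.integrable μ) (ae_of_all _ fun y => ⟨?_, ?_⟩) ?_
  · exact hpos _ (by linarith) _ h1A (fun z => Set.indicator_nonneg (fun _ _ => zero_le_one) z) y
  · exact (le_abs_self _).trans <| hM _ (by linarith) _ h1A (abs_indicator_one_le A) y
  · rw [hg_mass]
    exact (ENNReal.lt_ofReal_iff_toReal_lt (measure_ne_top μ A)).1 hμA

theorem stmt_14 {Ω : Type*} [TopologicalSpace Ω] [T2Space Ω] [SecondCountableTopology Ω]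
    [MeasurableSpace Ω] [BorelSpace Ω]
    (μ : Measure Ω) [IsFiniteMeasure μ]
    (hμpos : ∀ U : Set Ω, IsOpen U → U.Nonempty → 0 < μ U)
    (T : ℝ → (Ω → ℝ) → (Ω → ℝ))
    (hTBb : ∀ t, 0 ≤ t → ∀ f, Bb f → Bb (T t f))
    (hadd : ∀ t, 0 ≤ t → ∀ f g, Bb f → Bb g → T t (f + g) = T t f + T t g)
    (hsmul : ∀ t, 0 ≤ t → ∀ (c : ℝ) (f), Bb f → T t (c • f) = c • T t f)
    (hpos : ∀ t, 0 ≤ t → ∀ f, Bb f → (∀ x, 0 ≤ f x) → ∀ x, 0 ≤ T t f x)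
    (hT0 : ∀ f, Bb f → T 0 f = f)
    (hsg : ∀ s t : ℝ, 0 ≤ s → 0 ≤ t → ∀ f, Bb f → T (s + t) f = T s (T t f))
    (hSF : ∀ t, 0 < t → ∀ f, Bb f → Continuous (T t f))
    (hinv : ∀ t, 0 ≤ t → ∀ f, Bb f → ∫ x, T t f x ∂μ = ∫ x, f x ∂μ)
    (τ : ℝ) (hτ : 0 < τ)
    (hbdd : ∃ M : ℝ, ∀ t, τ ≤ t → ∀ f, Bb f → (∀ x, |f x| ≤ 1) → ∀ x, |T t f x| ≤ M)
    (K : ℝ → Ω → Ω → ℝ)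
    (hK : ∀ t, 0 < t → ∀ x : Ω, (∀ᵐ y ∂μ, 0 ≤ K t x y) ∧ Integrable (K t x) μ ∧
      ∀ f, Bb f → T t f x = ∫ y, K t x y * f y ∂μ)
    (hequi : ∀ c t : ℝ, 0 < c → 0 < t → ∀ x : Ω, ∀ ε > (0 : ℝ),
      ∃ U : Set Ω, IsOpen U ∧ x ∈ U ∧ ∀ y ∈ U, ∀ f, Bb f → (∀ z, |f z| ≤ c) →
        |T t f y - T t f x| < ε) :
    ∀ x : Ω, ∀ ε > (0 : ℝ), ∃ δ > (0 : ℝ), ∀ t, 2 * τ ≤ t →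
      ∀ A : Set Ω, MeasurableSet A → μ A < ENNReal.ofReal δ →
        ∫ y in A, K t x y ∂μ < ε :=
  stmt_14_general μ T hTBb hpos hsg hinv τ hτ hbdd K hK
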